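/- Subtyping implies compatibility for table types: for all schemas σ₁ and σ₂, if Table(σ₁) <: Table(σ₂) then Table(σ₁) ~ Table(σ₂). -/
import Mathlib


/-- Column types in the refinement type system. -/
inductive ColTy where
  | top | quantitative | qualitative | discrete | continuous
  | nominal | ordinal | temporal
deriving DecidableEq

/-- The subtyping axioms on column types. -/
inductive ColSubAx : ColTy → ColTy → Prop where
  | quant_top : ColSubAx .quantitative .top
  | qual_top  : ColSubAx .qualitative .top
  | disc_quant : ColSubAx .discrete .quantitative
  | cont_quant : ColSubAx .continuous .quantitative
  | nom_qual  : ColSubAx .nominal .qualitative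
  | ord_qual  : ColSubAx .ordinal .qualitative
  | temp_qual : ColSubAx .temporal .qualitative

/-- Column subtyping: the reflexive-transitive closure of the axioms. -/
def ColSub : ColTy → ColTy → Prop := Relation.ReflTransGen ColSubAx

/-- Two column types are compatible iff one is a subtype of the other. -/
def ColCompat (β₁ β₂ : ColTy) : Prop := ColSub β₁ β₂ ∨ ColSub β₂ β₁

/-- A schema is a finite partial map from column names to column types. -/
abbrev Schema := Finmap (fun _ : String => ColTy)

/-- Table subtyping (a table type `Table σ` is determined by its schema `σ`;
    since `Finmap` is quotiented by permutation, the permutation rule is implicit). -/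
inductive TableSub : Schema → Schema → Prop where
  | width (σ₁ σ₂ : Schema) :
      (∀ c τ, σ₂.lookup c = some τ → σ₁.lookup c = some τ) → TableSub σ₁ σ₂
  | depth (σ₁ σ₂ : Schema) :
      σ₁.keys = σ₂.keys →
      (∀ c τ₁ τ₂, σ₁.lookup c = some τ₁ → σ₂.lookup c = some τ₂ → ColSub τ₁ τ₂) →
      TableSub σ₁ σ₂
  | trans {σ₁ σ₂ σ₃ : Schema} : TableSub σ₁ σ₂ → TableSub σ₂ σ₃ → TableSub σ₁ σ₃

/-- Table compatibility: every shared column's types are compatible. -/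
def TableCompat (σ₁ σ₂ : Schema) : Prop :=
  ∀ c τ₁ τ₂, σ₁.lookup c = some τ₁ → σ₂.lookup c = some τ₂ → ColCompat τ₁ τ₂

lemma tableSub_lookup {σ₁ σ₂ : Schema} (h : TableSub σ₁ σ₂) :
    ∀ c τ₂, σ₂.lookup c = some τ₂ → ∃ τ₁, σ₁.lookup c = some τ₁ ∧ ColSub τ₁ τ₂ := by
  induction h with
  | width σ₁ σ₂ h =>
      intro c τ₂ hl
      exact ⟨τ₂, h c τ₂ hl, Relation.ReflTransGen.refl⟩
  | depth σ₁ σ₂ hk h =>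
      intro c τ₂ hl
      have hc : c ∈ σ₁ := by
        rw [← Finmap.mem_keys, hk, Finmap.mem_keys]
        exact Finmap.lookup_isSome.mp (by simp [hl])
      obtain ⟨τ₁, hτ₁⟩ := Option.isSome_iff_exists.mp (Finmap.lookup_isSome.mpr hc)
      exact ⟨τ₁, hτ₁, h c τ₁ τ₂ hτ₁ hl⟩
  | trans h12 h23 ih12 ih23 =>
      intro c τ₃ hl
      obtain ⟨τ₂, hτ₂, hs23⟩ := ih23 c τ₃ hl
      obtain ⟨τ₁, hτ₁, hs12⟩ := ih12 c τ₂ hτ₂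
      exact ⟨τ₁, hτ₁, hs12.trans hs23⟩

/-- Subtyping implies compatibility for table types. -/
theorem tableSub_implies_tableCompat (σ₁ σ₂ : Schema) :
    TableSub σ₁ σ₂ → TableCompat σ₁ σ₂ := by
  intro h c τ₁ τ₂ h₁ h₂
  obtain ⟨τ, hτ, hs⟩ := tableSub_lookup h c τ₂ h₂
  rw [h₁] at hτ
  cases hτ
  exact Or.inl hs
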